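/- arXiv:2311.17806 — 4 statements merged into one kernel-verified Lean document; each statement's English description precedes it below -/
import Mathlib

section
/- Let Δ' be a pure simplicial complex whose facets admit a shelling order F₁ ≺ ⋯ ≺ Fₙ. Then for every vertex v of Δ', the link of v in Δ' is shellable, with shelling order induced by restricting the given order to those facets containing v and deleting v from each. -/
/-!
A face `G` of the link of `v` inside the facet `F (e j)` lies in an earlier facet containing `v`
exactly when `insert v G` lies in an earlier facet of the whole complex. The shelling property of
`F` extends `insert v G` to a codimension-one face `H` of `F (e j)` lying in an earlier facet;
that facet contains `v ∈ H`, so it is some `F (e j'')` with `j'' < j`, and `H \ {v}` is the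
required codimension-one face of `F (e j) \ {v}`.
-/

/-- An ordering `F 0 ≺ F 1 ≺ ⋯` of facets is a shelling if for each `i ≥ 1` the complex
`⟨F i⟩ ∩ ⟨F 0, …, F (i-1)⟩` is pure of dimension `dim (F i) - 1`: it contains a face of
cardinality `(F i).card - 1`, and every face of it extends to such a face inside it. -/
def SimplicialShelling {V : Type*} {n : ℕ} (F : Fin n → Finset V) : Prop :=
  ∀ i : Fin n, 0 < (i : ℕ) →
    (∃ H : Finset V, H ⊆ F i ∧ (∃ j, j < i ∧ H ⊆ F j) ∧ H.card + 1 = (F i).card) ∧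
    (∀ G : Finset V, G ⊆ F i → (∃ j, j < i ∧ G ⊆ F j) →
      ∃ H : Finset V, H ⊆ F i ∧ (∃ j, j < i ∧ H ⊆ F j) ∧ G ⊆ H ∧ H.card + 1 = (F i).card)

section

open Finset

variable {V : Type*} {n : ℕ}

theorem SimplicialShelling.of_extend {F : Fin n → Finset V}
    (h : ∀ i : Fin n, ∀ G ⊆ F i, (∃ j < i, G ⊆ F j) →
      ∃ H ⊆ F i, (∃ j < i, H ⊆ F j) ∧ G ⊆ H ∧ #H + 1 = #(F i)) :
    SimplicialShelling F := by
  intro i hi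
  refine ⟨?_, h i⟩
  obtain ⟨H, hHi, hprev, -, hcard⟩ :=
    h i ∅ (empty_subset _) ⟨⟨0, by omega⟩, Fin.lt_def.2 hi, empty_subset _⟩
  exact ⟨H, hHi, hprev, hcard⟩

theorem SimplicialShelling.link_extend [DecidableEq V] {m : ℕ} {F : Fin n → Finset V}
    (hshell : SimplicialShelling F) {v : V} {e : Fin m → Fin n} (hmono : StrictMono e)
    (hrange : ∀ i, v ∈ F i ↔ ∃ j, e j = i) (j : Fin m) (G : Finset V)
    (hG : G ⊆ F (e j) \ {v}) (hprev : ∃ j' < j, G ⊆ F (e j') \ {v}) :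
    ∃ H ⊆ F (e j) \ {v}, (∃ j' < j, H ⊆ F (e j') \ {v}) ∧ G ⊆ H ∧
      #H + 1 = #(F (e j) \ {v}) := by
  obtain ⟨j', hj', hGj'⟩ := hprev
  have hv : ∀ j, v ∈ F (e j) := fun j => (hrange (e j)).2 ⟨j, rfl⟩
  simp only [sdiff_singleton_eq_erase, subset_erase] at hG hGj' ⊢
  have hpos : 0 < (e j : ℕ) := lt_of_le_of_lt (Nat.zero_le _) (hmono hj')
  obtain ⟨H, hHj, ⟨k, hk, hHk⟩, hGH, hcard⟩ := (hshell (e j) hpos).2 (insert v G)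
    (insert_subset (hv j) hG.1) ⟨e j', hmono hj', insert_subset (hv j') hGj'.1⟩
  have hvH : v ∈ H := hGH (mem_insert_self v G)
  obtain ⟨j'', rfl⟩ := (hrange k).1 (hHk hvH)
  refine ⟨H.erase v, ⟨(erase_subset v H).trans hHj, notMem_erase v H⟩,
    ⟨j'', hmono.lt_iff_lt.1 hk, (erase_subset v H).trans hHk, notMem_erase v H⟩,
    subset_erase.2 ⟨(subset_insert v G).trans hGH, hG.2⟩, ?_⟩
  have := card_erase_add_one hvH
  have := card_erase_add_one (hv j)
  omega

end

theorem stmt_2_general {V : Type*} [DecidableEq V] {n m : ℕ} (F : Fin n → Finset V)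
    (hshell : SimplicialShelling F)
    (v : V)
    (e : Fin m → Fin n) (hmono : StrictMono e)
    (hrange : ∀ i : Fin n, v ∈ F i ↔ ∃ j, e j = i) :
    SimplicialShelling (fun j : Fin m => F (e j) \ {v}) :=
  SimplicialShelling.of_extend (hshell.link_extend hmono hrange)

/-- The link of a vertex of a pure shellable complex is shellable, with the
induced order on the facets containing `v` (with `v` deleted). -/
theorem stmt_2 {V : Type*} [DecidableEq V] {n m : ℕ} (F : Fin n → Finset V)
    (hpure : ∀ i j, (F i).card = (F j).card)
    (hshell : SimplicialShelling F)
    (v : V) (hv : ∃ i, v ∈ F i)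
    (e : Fin m → Fin n) (hmono : StrictMono e)
    (hrange : ∀ i : Fin n, v ∈ F i ↔ ∃ j, e j = i) :
    SimplicialShelling (fun j : Fin m => F (e j) \ {v}) :=
  stmt_2_general F hshell v e hmono hrange
end

section
/- Let ψ : Δ' → Δ be a surjective, dimension-preserving simplicial map of finite simplicial complexes, and let x be a vertex of Δ with preimage vertices v₁, …, v_s. Then link_Δ(x) = ⋃_{j=1}^{s} ψ(link_{Δ'}(v_j)), where ψ(link_{Δ'}(v_j)) denotes the simplicial complex of images of faces of link_{Δ'}(v_j). -/
/-! A dimension-preserving simplicial map is injective on every face. Lifting a face `insert x F`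
of `Δ` to a face `G'` of `Δ'` and removing the unique preimage `v` of `x` from `G'` gives a face of
the link of `v` mapping onto `F`; conversely, injectivity on `insert v G` keeps `ψ v` out of the
image of `G`. -/

namespace Finset

variable {α β : Type*} [DecidableEq β]

lemma image_erase_of_injOn [DecidableEq α] {f : α → β} {s : Finset α} (hf : Set.InjOn f s) {a : α}
    (ha : a ∈ s) : (s.erase a).image f = (s.image f).erase (f a) := by
  rw [erase_eq, image_sdiff_of_injOn hf (singleton_subset_iff.mpr ha), image_singleton,
    erase_eq]

lemma apply_notMem_image_of_injOn_insert [DecidableEq α] {f : α → β} {s : Finset α} {a : α}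
    (hf : Set.InjOn f (insert a s)) (ha : a ∉ s) : f a ∉ s.image f := by
  rintro hfa
  obtain ⟨b, hb, hba⟩ := mem_image.mp hfa
  exact ha (hf (by simp [hb]) (by simp) hba ▸ hb)

end Finset

section SimplicialMap

variable {V' V : Type*} [DecidableEq V'] [DecidableEq V] {Δ' : Set (Finset V')}
  {Δ : Set (Finset V)} {ψ : V' → V}

lemma exists_mem_link_image_eq (hΔ' : ∀ F ∈ Δ', ∀ G ⊆ F, G ∈ Δ')
    (hdim : ∀ F ∈ Δ', (F.image ψ).card = F.card)
    (hsurj : ∀ F ∈ Δ, ∃ G ∈ Δ', G.image ψ = F) {x : V} {F : Finset V} (hxF : x ∉ F)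
    (hins : insert x F ∈ Δ) :
    ∃ v : V', ψ v = x ∧ ∃ G ∈ Δ', v ∉ G ∧ insert v G ∈ Δ' ∧ G.image ψ = F := by
  obtain ⟨G', hG', hG'F⟩ := hsurj _ hins
  have hinj : Set.InjOn ψ G' := Finset.injOn_of_card_image_eq (hdim G' hG')
  obtain ⟨v, hvG', rfl⟩ := Finset.mem_image.mp (hG'F ▸ Finset.mem_insert_self x F)
  refine ⟨v, rfl, G'.erase v, hΔ' G' hG' _ (Finset.erase_subset v G'),
    Finset.notMem_erase v G', by rwa [Finset.insert_erase hvG'], ?_⟩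
  rw [Finset.image_erase_of_injOn hinj hvG', hG'F, Finset.erase_insert hxF]

lemma apply_notMem_image_of_insert_mem (hdim : ∀ F ∈ Δ', (F.image ψ).card = F.card)
    {v : V'} {G : Finset V'} (hvG : v ∉ G) (hins : insert v G ∈ Δ') : ψ v ∉ G.image ψ :=
  Finset.apply_notMem_image_of_injOn_insert
    (by exact_mod_cast Finset.injOn_of_card_image_eq (hdim _ hins)) hvG

end SimplicialMap

theorem stmt_3_general {V' V : Type*} [DecidableEq V'] [DecidableEq V]
    (Δ' : Set (Finset V')) (Δ : Set (Finset V))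
    (hΔ' : ∀ F ∈ Δ', ∀ G ⊆ F, G ∈ Δ')
    (ψ : V' → V)
    (hmap : ∀ F ∈ Δ', Finset.image ψ F ∈ Δ)
    (hdim : ∀ F ∈ Δ', (Finset.image ψ F).card = F.card)
    (hsurj : ∀ F ∈ Δ, ∃ G ∈ Δ', Finset.image ψ G = F)
    (x : V) :
    ∀ F : Finset V,
      (F ∈ Δ ∧ x ∉ F ∧ insert x F ∈ Δ) ↔
      (∃ v : V', ψ v = x ∧
        ∃ G ∈ Δ', v ∉ G ∧ insert v G ∈ Δ' ∧ Finset.image ψ G = F) := by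
  intro F
  constructor
  · rintro ⟨-, hxF, hins⟩
    exact exists_mem_link_image_eq hΔ' hdim hsurj hxF hins
  · rintro ⟨v, rfl, G, hG, hvG, hins, rfl⟩
    refine ⟨hmap G hG, apply_notMem_image_of_insert_mem hdim hvG hins, ?_⟩
    rw [← Finset.image_insert]
    exact hmap _ hins

/-- For a surjective dimension-preserving simplicial map `ψ : Δ' → Δ` and a
vertex `x` of `Δ`, the link of `x` in `Δ` is the union over the preimage vertices `v` of
`x` of the images of the links of `v` in `Δ'`. -/
theorem stmt_3 {V' V : Type*} [DecidableEq V'] [DecidableEq V]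
    (Δ' : Set (Finset V')) (Δ : Set (Finset V))
    (hΔ' : ∀ F ∈ Δ', ∀ G ⊆ F, G ∈ Δ')
    (hΔ : ∀ F ∈ Δ, ∀ G ⊆ F, G ∈ Δ)
    (ψ : V' → V)
    (hmap : ∀ F ∈ Δ', Finset.image ψ F ∈ Δ)
    (hdim : ∀ F ∈ Δ', (Finset.image ψ F).card = F.card)
    (hsurj : ∀ F ∈ Δ, ∃ G ∈ Δ', Finset.image ψ G = F)
    (x : V) (hx : ({x} : Finset V) ∈ Δ) :
    ∀ F : Finset V,
      (F ∈ Δ ∧ x ∉ F ∧ insert x F ∈ Δ) ↔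
      (∃ v : V', ψ v = x ∧
        ∃ G ∈ Δ', v ∉ G ∧ insert v G ∈ Δ' ∧ Finset.image ψ G = F) :=
  stmt_3_general Δ' Δ hΔ' ψ hmap hdim hsurj x
end

section
/- Let ψ : Δ' → Δ be a surjective, dimension-preserving simplicial map of finite simplicial complexes, let B be a subcomplex of Δ such that every face F of Δ with more than one preimage face under ψ lies in B. Let x be a vertex of Δ and v ≠ w two distinct preimage vertices of x in Δ'. Then for any face F of Δ lying in both ψ(link_{Δ'}(v)) and ψ(link_{Δ'}(w)), the face F ∪ {x} lies in B. -/
/-! Lifting `F` through the two links gives the faces `v ∪ G` and `w ∪ H` of `Δ'`, both mapping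
onto `F ∪ {x}`. They are distinct: since `ψ` preserves dimension it is injective on `w ∪ H`, so
that face cannot contain `v` as well as `w`. Hence `F ∪ {x}` has two preimage faces and lies in `B`. -/

theorem Finset.insert_ne_insert_of_injOn {α β : Type*} [DecidableEq α] {ψ : α → β}
    {v w : α} {G H : Finset α} (hinj : Set.InjOn ψ (insert w H : Finset α))
    (hvw : v ≠ w) (hψ : ψ v = ψ w) : insert v G ≠ insert w H := by
  intro h
  have hv : v ∈ insert w H := h ▸ Finset.mem_insert_self v G
  exact hvw (hinj hv (Finset.mem_insert_self w H) hψ)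

theorem stmt_4_general {V' V : Type*} [DecidableEq V'] [DecidableEq V]
    (Δ' : Set (Finset V')) (Δ : Set (Finset V))
    (ψ : V' → V)
    (hmap : ∀ F ∈ Δ', Finset.image ψ F ∈ Δ)
    (hdim : ∀ F ∈ Δ', (Finset.image ψ F).card = F.card)
    (B : Set (Finset V))
    (hfib : ∀ F ∈ Δ, (∃ G ∈ Δ', ∃ G' ∈ Δ', G ≠ G' ∧
        Finset.image ψ G = F ∧ Finset.image ψ G' = F) → F ∈ B)
    (x : V) (v w : V') (hvw : v ≠ w) (hv : ψ v = x) (hw : ψ w = x)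
    (F : Finset V)
    (hFv : ∃ G ∈ Δ', v ∉ G ∧ insert v G ∈ Δ' ∧ Finset.image ψ G = F)
    (hFw : ∃ G ∈ Δ', w ∉ G ∧ insert w G ∈ Δ' ∧ Finset.image ψ G = F) :
    insert x F ∈ B := by
  obtain ⟨G, -, -, hvG, rfl⟩ := hFv
  obtain ⟨H, -, -, hwH, hHG⟩ := hFw
  have himg_v : (insert v G).image ψ = insert x (G.image ψ) := by
    rw [Finset.image_insert, hv]
  have himg_w : (insert w H).image ψ = insert x (G.image ψ) := by
    rw [Finset.image_insert, hw, hHG]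
  have hne : insert v G ≠ insert w H :=
    Finset.insert_ne_insert_of_injOn (Finset.card_image_iff.mp (hdim _ hwH)) hvw
      (hv.trans hw.symm)
  exact hfib _ (himg_v ▸ hmap _ hvG) ⟨_, hvG, _, hwH, hne, himg_v, himg_w⟩

/-- If every face of `Δ` with more than one preimage face lies in the
subcomplex `B`, and `v ≠ w` are preimage vertices of `x`, then any face `F` lying in both
`ψ(link_{Δ'}(v))` and `ψ(link_{Δ'}(w))` satisfies `F ∪ {x} ∈ B`. -/
theorem stmt_4 {V' V : Type*} [DecidableEq V'] [DecidableEq V]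
    (Δ' : Set (Finset V')) (Δ : Set (Finset V))
    (hΔ' : ∀ F ∈ Δ', ∀ G ⊆ F, G ∈ Δ')
    (hΔ : ∀ F ∈ Δ, ∀ G ⊆ F, G ∈ Δ)
    (ψ : V' → V)
    (hmap : ∀ F ∈ Δ', Finset.image ψ F ∈ Δ)
    (hdim : ∀ F ∈ Δ', (Finset.image ψ F).card = F.card)
    (hsurj : ∀ F ∈ Δ, ∃ G ∈ Δ', Finset.image ψ G = F)
    (B : Set (Finset V)) (hBsub : B ⊆ Δ) (hBcx : ∀ F ∈ B, ∀ G ⊆ F, G ∈ B)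
    (hfib : ∀ F ∈ Δ, (∃ G ∈ Δ', ∃ G' ∈ Δ', G ≠ G' ∧
        Finset.image ψ G = F ∧ Finset.image ψ G' = F) → F ∈ B)
    (x : V) (v w : V') (hvw : v ≠ w) (hv : ψ v = x) (hw : ψ w = x)
    (F : Finset V)
    (hFv : ∃ G ∈ Δ', v ∉ G ∧ insert v G ∈ Δ' ∧ Finset.image ψ G = F)
    (hFw : ∃ G ∈ Δ', w ∉ G ∧ insert w G ∈ Δ' ∧ Finset.image ψ G = F) :
    insert x F ∈ B :=
  stmt_4_general Δ' Δ ψ hmap hdim B hfib x v w hvw hv hw F hFv hFw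
end

section
/- Let ψ : Δ' → Δ be a surjective, dimension-preserving simplicial map of finite simplicial complexes, and let F₁, F₂ be faces of Δ' such that ψ(F₁) ∩ ψ(F₂) has exactly one preimage face under ψ (i.e., there is a unique face G of Δ' with ψ(G) = ψ(F₁) ∩ ψ(F₂)). If v ∈ F₁ and w ∈ F₂ are vertices with ψ(v) = ψ(w) and ψ(v) ∈ ψ(F₁) ∩ ψ(F₂), then v = w. -/
/-! Restricting `F₁` and `F₂` to the vertices over `ψ(F₁) ∩ ψ(F₂)` gives two faces of `Δ'`,
both mapping onto that intersection; by uniqueness they are the same face `G`, which contains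
`v` and `w`. Since `ψ` preserves dimension it is injective on `G`, so `ψ v = ψ w` forces
`v = w`. -/

open Finset

theorem Finset.image_filter_mem_eq_of_subset {α β : Type*} [DecidableEq β] {f : α → β}
    {s : Finset α} {t : Finset β} (ht : t ⊆ s.image f) :
    (s.filter (fun x => f x ∈ t)).image f = t := by
  rw [← filter_image (p := (· ∈ t)), filter_mem_eq_inter, inter_eq_right.2 ht]

theorem filter_mem_eq_of_unique_preimage_face {V' V : Type*} [DecidableEq V]
    {Δ' : Set (Finset V')} (hΔ' : ∀ F ∈ Δ', ∀ G ⊆ F, G ∈ Δ') {ψ : V' → V} {t : Finset V}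
    {G : Finset V'} (hG : ∀ H, H ∈ Δ' ∧ H.image ψ = t → H = G)
    {F : Finset V'} (hF : F ∈ Δ') (ht : t ⊆ F.image ψ) :
    F.filter (fun x => ψ x ∈ t) = G :=
  hG _ ⟨hΔ' F hF _ (filter_subset _ _), image_filter_mem_eq_of_subset ht⟩

theorem stmt_10_general {V' V : Type*} [DecidableEq V]
    (Δ' : Set (Finset V'))
    (hΔ' : ∀ F ∈ Δ', ∀ G ⊆ F, G ∈ Δ')
    (ψ : V' → V)
    (hdim : ∀ F ∈ Δ', (Finset.image ψ F).card = F.card)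
    (F₁ F₂ : Finset V') (hF₁ : F₁ ∈ Δ') (hF₂ : F₂ ∈ Δ')
    (huniq : ∃! G : Finset V', G ∈ Δ' ∧
      Finset.image ψ G = Finset.image ψ F₁ ∩ Finset.image ψ F₂)
    (v w : V') (hv : v ∈ F₁) (hw : w ∈ F₂) (hvw : ψ v = ψ w)
    (hmem : ψ v ∈ Finset.image ψ F₁ ∩ Finset.image ψ F₂) :
    v = w := by
  obtain ⟨G, ⟨hG, -⟩, hG_unique⟩ := huniq
  have hvG : v ∈ G :=
    filter_mem_eq_of_unique_preimage_face hΔ' hG_unique hF₁ inter_subset_left ▸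
      mem_filter.2 ⟨hv, hmem⟩
  have hwG : w ∈ G :=
    filter_mem_eq_of_unique_preimage_face hΔ' hG_unique hF₂ inter_subset_right ▸
      mem_filter.2 ⟨hw, hvw ▸ hmem⟩
  exact card_image_iff.1 (hdim G hG) hvG hwG hvw

/-- if `ψ(F₁) ∩ ψ(F₂)` has a unique preimage face, then preimage vertices
in `F₁` and `F₂` of a common vertex of the intersection coincide. -/
theorem stmt_10 {V' V : Type*} [DecidableEq V'] [DecidableEq V]
    (Δ' : Set (Finset V')) (Δ : Set (Finset V))
    (hΔ' : ∀ F ∈ Δ', ∀ G ⊆ F, G ∈ Δ')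
    (hΔ : ∀ F ∈ Δ, ∀ G ⊆ F, G ∈ Δ)
    (ψ : V' → V)
    (hmap : ∀ F ∈ Δ', Finset.image ψ F ∈ Δ)
    (hdim : ∀ F ∈ Δ', (Finset.image ψ F).card = F.card)
    (hsurj : ∀ F ∈ Δ, ∃ G ∈ Δ', Finset.image ψ G = F)
    (F₁ F₂ : Finset V') (hF₁ : F₁ ∈ Δ') (hF₂ : F₂ ∈ Δ')
    (huniq : ∃! G : Finset V', G ∈ Δ' ∧
      Finset.image ψ G = Finset.image ψ F₁ ∩ Finset.image ψ F₂)
    (v w : V') (hv : v ∈ F₁) (hw : w ∈ F₂) (hvw : ψ v = ψ w)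
    (hmem : ψ v ∈ Finset.image ψ F₁ ∩ Finset.image ψ F₂) :
    v = w :=
  stmt_10_general Δ' hΔ' ψ hdim F₁ F₂ hF₁ hF₂ huniq v w hv hw hvw hmem
end
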